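/- Let a, b, c, d be positive rationals with m the least positive rational such that m/a, m/b, m/c, m/d are positive integers. Suppose a = 2, b ≤ 3, c ≤ 4, and m(1/a + 1/b + 1/c + 1/d) − 1 − m = 1. Then m/d = 1 (i.e., d = m) and m ≤ 12. -/
import Mathlib


def IsLcmOf (a b c d m : ℚ) : Prop :=
  (0 < m ∧ (∃ n : ℕ, 0 < n ∧ m / a = n) ∧ (∃ n : ℕ, 0 < n ∧ m / b = n) ∧
    (∃ n : ℕ, 0 < n ∧ m / c = n) ∧ (∃ n : ℕ, 0 < n ∧ m / d = n)) ∧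
  ∀ m' : ℚ, (0 < m' ∧ (∃ n : ℕ, 0 < n ∧ m' / a = n) ∧ (∃ n : ℕ, 0 < n ∧ m' / b = n) ∧
    (∃ n : ℕ, 0 < n ∧ m' / c = n) ∧ (∃ n : ℕ, 0 < n ∧ m' / d = n)) → m ≤ m'

theorem cE6_numerical_first_step (a b c d m : ℚ)
    (ha0 : 0 < a) (hb0 : 0 < b) (hc0 : 0 < c) (hd0 : 0 < d)
    (hm : IsLcmOf a b c d m)
    (ha : a = 2) (hb : b ≤ 3) (hc : c ≤ 4)
    (heq : m * (1/a + 1/b + 1/c + 1/d) - 1 - m = 1) :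
    m / d = 1 ∧ m ≤ 12 := by
  obtain ⟨⟨hm0, ⟨n1, hn1, h1⟩, ⟨n2, hn2, h2⟩, ⟨n3, hn3, h3⟩, ⟨n4, hn4, h4⟩⟩, -⟩ := hm
  subst ha
  have e1 : m = 2 * n1 := by
    have := (div_eq_iff (by norm_num : (2:ℚ) ≠ 0)).mp h1; linarith
  have e2 : m = n2 * b := (div_eq_iff hb0.ne').mp h2
  have e3 : m = n3 * c := (div_eq_iff hc0.ne').mp h3
  have e4 : m = n4 * d := (div_eq_iff hd0.ne').mp h4
  have hn2' : m ≤ 3 * n2 := by nlinarith [Nat.one_le_iff_ne_zero.mpr hn2.ne',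
    (by exact_mod_cast Nat.one_le_iff_ne_zero.mpr hn2.ne' : (1:ℚ) ≤ n2)]
  have hn3' : m ≤ 4 * n3 := by nlinarith [(by exact_mod_cast Nat.one_le_iff_ne_zero.mpr hn3.ne' : (1:ℚ) ≤ n3)]
  have hsum : (n1 : ℚ) + n2 + n3 + n4 = m + 2 := by
    have hb' := hb0.ne'
    have hc' := hc0.ne'
    have hd' := hd0.ne'
    have t2 : m * (1 / b) = n2 := by rw [mul_one_div]; exact h2
    have t3 : m * (1 / c) = n3 := by rw [mul_one_div]; exact h3
    have t4 : m * (1 / d) = n4 := by rw [mul_one_div]; exact h4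
    have t1 : m * (1 / 2) = n1 := by rw [mul_one_div]; exact h1
    rw [mul_add, mul_add, mul_add, t1, t2, t3, t4] at heq
    linarith
  have hn1' : (1:ℚ) ≤ n1 := by exact_mod_cast Nat.one_le_iff_ne_zero.mpr hn1.ne'
  have hn4lt : (n4 : ℚ) < 2 := by linarith
  have hn4ge : (1:ℚ) ≤ n4 := by exact_mod_cast Nat.one_le_iff_ne_zero.mpr hn4.ne'
  have hn4 : n4 = 1 := by
    have : n4 < 2 := by exact_mod_cast hn4lt
    omega
  subst hn4
  constructor
  · simpa using h4
  · push_cast at hsum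
    linarith
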